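/- Let n ≥ 2 and let Γ be the one-edge bridge gluing of two copies of the complete graph K_n, joining a chosen vertex of the first copy to a chosen vertex of the second copy by a single new edge, with Laplacian matrix L. Then the Fiedler value of Γ equals (n + 2 − √(n² + 4n − 4))/2: that is, this number is an eigenvalue of L, and every real eigenvalue λ of L with λ ≠ 0 satisfies λ ≥ (n + 2 − √(n² + 4n − 4))/2. -/

import Mathlib

/-!
On each copy of `K_n` the Laplacian acts as `x ↦ n x - (sum over the copy)`, and the bridge adds
`±D` at its two endpoints, where `D = x(v₁) - x(v₂)`. For an eigenvector with eigenvalue `λ`,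
summing the rows of each copy gives `λ S₁ = D = -λ S₂`, and subtracting the two bridge rows then
gives `(λ² - (n + 2) λ + 2) D = 0`; if `D = 0` and `λ ∉ {0, n}` every entry vanishes. So a nonzero
eigenvalue is `n` or a root of `λ² - (n + 2) λ + 2`, and both lie above the smaller root, which is
attained by the vector that is `1` on the first copy and `-1` on the second, except for `1 - λ` and
`λ - 1` at the bridge endpoints.
-/

open scoped Classical

/-- `lam` is a (real) eigenvalue of the square matrix `M`. -/
def HasEig {ι : Type*} [Fintype ι] (M : Matrix ι ι ℝ) (lam : ℝ) : Prop :=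
  ∃ v : ι → ℝ, v ≠ 0 ∧ M.mulVec v = lam • v

/-- The one-edge bridge gluing of `G₁` and `G₂`: the graph on `V₁ ⊕ V₂` with a single new
edge joining `v₁` to `v₂`. -/
def bridgeGlueOne {V₁ V₂ : Type*} (G₁ : SimpleGraph V₁) (G₂ : SimpleGraph V₂)
    (v₁ : V₁) (v₂ : V₂) : SimpleGraph (V₁ ⊕ V₂) where
  Adj x y :=
    match x, y with
    | Sum.inl u, Sum.inl v => G₁.Adj u v
    | Sum.inr u, Sum.inr v => G₂.Adj u v
    | Sum.inl u, Sum.inr v => u = v₁ ∧ v = v₂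
    | Sum.inr u, Sum.inl v => v = v₁ ∧ u = v₂
  symm := by
    constructor
    rintro (u | u) (v | v) h
    · exact G₁.adj_symm h
    · exact h
    · exact h
    · exact G₂.adj_symm h
  loopless := by
    constructor
    rintro (u | u) h
    · exact G₁.ne_of_adj h rfl
    · exact G₂.ne_of_adj h rfl

open Matrix Finset

namespace SimpleGraph

variable {V : Type*} [Fintype V] [DecidableEq V]

theorem lapMatrix_mulVec_apply_eq_sum {R : Type*} [Ring R] (G : SimpleGraph V)
    [DecidableRel G.Adj] (f : V → R) (i : V) :
    (G.lapMatrix R *ᵥ f) i = ∑ j, if G.Adj i j then f i - f j else 0 := by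
  rw [lapMatrix_mulVec_apply, degree_eq_sum_if_adj, neighborFinset_eq_filter, sum_filter,
    sum_mul, ← sum_sub_distrib]
  refine sum_congr rfl fun j _ => ?_
  split_ifs <;> simp

theorem sum_lapMatrix_mulVec {R : Type*} [CommRing R] (G : SimpleGraph V) [DecidableRel G.Adj]
    (f : V → R) : ∑ i, (G.lapMatrix R *ᵥ f) i = 0 := by
  rw [← one_dotProduct, dotProduct_mulVec, ← mulVec_transpose, (G.isSymm_lapMatrix (R := R)).eq,
    Pi.one_def, lapMatrix_mulVec_const_eq_zero, zero_dotProduct]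

theorem lapMatrix_top_mulVec_apply {R : Type*} [Ring R] (f : V → R) (i : V) :
    ((⊤ : SimpleGraph V).lapMatrix R *ᵥ f) i = Fintype.card V * f i - ∑ j, f j := by
  rw [lapMatrix_mulVec_apply, neighborFinset_top, ← sum_compl_add_sum {i}, sum_singleton,
    show (⊤ : SimpleGraph V).degree i = Fintype.card V - 1 from complete_graph_degree i,
    Nat.cast_pred (Fintype.card_pos_iff.mpr ⟨i⟩), sub_one_mul]
  abel

end SimpleGraph

section bridgeGlueOne

variable {V₁ V₂ : Type*} {G₁ : SimpleGraph V₁} {G₂ : SimpleGraph V₂} {v₁ : V₁} {v₂ : V₂}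

@[simp]
theorem bridgeGlueOne_adj_inl_inr {u : V₁} {w : V₂} :
    (bridgeGlueOne G₁ G₂ v₁ v₂).Adj (Sum.inl u) (Sum.inr w) ↔ u = v₁ ∧ w = v₂ := Iff.rfl

@[simp]
theorem bridgeGlueOne_adj_inr_inl {u : V₂} {w : V₁} :
    (bridgeGlueOne G₁ G₂ v₁ v₂).Adj (Sum.inr u) (Sum.inl w) ↔ u = v₂ ∧ w = v₁ :=
  and_comm

variable [Fintype V₁] [Fintype V₂] [DecidableEq V₁] [DecidableEq V₂]
  [DecidableRel (bridgeGlueOne G₁ G₂ v₁ v₂).Adj]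

theorem bridgeGlueOne_lapMatrix_mulVec_inl [DecidableRel G₁.Adj] (f : V₁ ⊕ V₂ → ℝ) (u : V₁) :
    ((bridgeGlueOne G₁ G₂ v₁ v₂).lapMatrix ℝ *ᵥ f) (Sum.inl u) =
      (G₁.lapMatrix ℝ *ᵥ (f ∘ Sum.inl)) u +
        if u = v₁ then f (Sum.inl v₁) - f (Sum.inr v₂) else 0 := by
  rw [SimpleGraph.lapMatrix_mulVec_apply_eq_sum, SimpleGraph.lapMatrix_mulVec_apply_eq_sum,
    Fintype.sum_sum_type]
  congr 1
  · exact sum_congr rfl fun _ _ => if_congr Iff.rfl rfl rfl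
  · by_cases hu : u = v₁ <;> simp [hu]

theorem bridgeGlueOne_lapMatrix_mulVec_inr [DecidableRel G₂.Adj] (f : V₁ ⊕ V₂ → ℝ) (u : V₂) :
    ((bridgeGlueOne G₁ G₂ v₁ v₂).lapMatrix ℝ *ᵥ f) (Sum.inr u) =
      (G₂.lapMatrix ℝ *ᵥ (f ∘ Sum.inr)) u +
        if u = v₂ then f (Sum.inr v₂) - f (Sum.inl v₁) else 0 := by
  rw [SimpleGraph.lapMatrix_mulVec_apply_eq_sum, SimpleGraph.lapMatrix_mulVec_apply_eq_sum,
    Fintype.sum_sum_type, add_comm]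
  congr 1
  · exact sum_congr rfl fun _ _ => if_congr Iff.rfl rfl rfl
  · by_cases hu : u = v₂ <;> simp [hu]

theorem sum_bridgeGlueOne_lapMatrix_mulVec_inl [DecidableRel G₁.Adj] (f : V₁ ⊕ V₂ → ℝ) :
    ∑ u, ((bridgeGlueOne G₁ G₂ v₁ v₂).lapMatrix ℝ *ᵥ f) (Sum.inl u) =
      f (Sum.inl v₁) - f (Sum.inr v₂) := by
  simp_rw [bridgeGlueOne_lapMatrix_mulVec_inl, sum_add_distrib,
    SimpleGraph.sum_lapMatrix_mulVec, sum_ite_eq', mem_univ, if_true, zero_add]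

theorem sum_bridgeGlueOne_lapMatrix_mulVec_inr [DecidableRel G₂.Adj] (f : V₁ ⊕ V₂ → ℝ) :
    ∑ u, ((bridgeGlueOne G₁ G₂ v₁ v₂).lapMatrix ℝ *ᵥ f) (Sum.inr u) =
      f (Sum.inr v₂) - f (Sum.inl v₁) := by
  simp_rw [bridgeGlueOne_lapMatrix_mulVec_inr, sum_add_distrib,
    SimpleGraph.sum_lapMatrix_mulVec, sum_ite_eq', mem_univ, if_true, zero_add]

end bridgeGlueOne

theorem sub_sqrt_discrim_div_two_le {b c x : ℝ} (h : x ^ 2 - b * x + c ≤ 0) :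
    (b - √(b ^ 2 - 4 * c)) / 2 ≤ x := by
  have := Real.abs_le_sqrt (x := 2 * x - b) (y := b ^ 2 - 4 * c) (by linarith)
  linarith [neg_abs_le (2 * x - b)]

theorem sub_sqrt_discrim_div_two_isRoot {b c : ℝ} (h : 0 ≤ b ^ 2 - 4 * c) :
    ((b - √(b ^ 2 - 4 * c)) / 2) ^ 2 - b * ((b - √(b ^ 2 - 4 * c)) / 2) + c = 0 := by
  linear_combination (1 / 4 : ℝ) * Real.sq_sqrt h

section completeBridge

variable {n : ℕ} {v₁ v₂ : Fin n}

theorem completeBridge_lapMatrix_mulVec_inl (f : Fin n ⊕ Fin n → ℝ) (u : Fin n) :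
    ((bridgeGlueOne (⊤ : SimpleGraph (Fin n)) ⊤ v₁ v₂).lapMatrix ℝ *ᵥ f) (Sum.inl u) =
      n * f (Sum.inl u) - ∑ w, f (Sum.inl w) +
        if u = v₁ then f (Sum.inl v₁) - f (Sum.inr v₂) else 0 := by
  rw [bridgeGlueOne_lapMatrix_mulVec_inl, SimpleGraph.lapMatrix_top_mulVec_apply,
    Fintype.card_fin]
  rfl

theorem completeBridge_lapMatrix_mulVec_inr (f : Fin n ⊕ Fin n → ℝ) (u : Fin n) :
    ((bridgeGlueOne (⊤ : SimpleGraph (Fin n)) ⊤ v₁ v₂).lapMatrix ℝ *ᵥ f) (Sum.inr u) =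
      n * f (Sum.inr u) - ∑ w, f (Sum.inr w) +
        if u = v₂ then f (Sum.inr v₂) - f (Sum.inl v₁) else 0 := by
  rw [bridgeGlueOne_lapMatrix_mulVec_inr, SimpleGraph.lapMatrix_top_mulVec_apply,
    Fintype.card_fin]
  rfl

theorem hasEig_completeBridge_of_isRoot (hn : 2 ≤ n) {lam : ℝ}
    (hlam : lam ^ 2 - (n + 2) * lam + 2 = 0) :
    HasEig ((bridgeGlueOne (⊤ : SimpleGraph (Fin n)) ⊤ v₁ v₂).lapMatrix ℝ) lam := by
  obtain ⟨u₀, hu₀⟩ := @exists_ne _ (Fin.nontrivial_iff_two_le.mpr hn) v₁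
  refine ⟨Sum.elim (1 - Pi.single v₁ lam) (Pi.single v₂ lam - 1),
    fun h => by simpa [hu₀] using congrFun h (Sum.inl u₀), funext ?_⟩
  rintro (u | u)
  · rw [completeBridge_lapMatrix_mulVec_inl]
    by_cases hu : u = v₁
    · subst hu
      simp only [Sum.elim_inl, Sum.elim_inr, Pi.sub_apply, Pi.one_apply, Pi.single_eq_same,
        Pi.smul_apply, smul_eq_mul, sum_sub_distrib, sum_pi_single', sum_const, card_univ,
        Fintype.card_fin, nsmul_eq_mul, mul_one, mem_univ, if_true]
      linear_combination hlam
    · simp [hu, sum_sub_distrib]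
  · rw [completeBridge_lapMatrix_mulVec_inr]
    by_cases hu : u = v₂
    · subst hu
      simp only [Sum.elim_inl, Sum.elim_inr, Pi.sub_apply, Pi.one_apply, Pi.single_eq_same,
        Pi.smul_apply, smul_eq_mul, sum_sub_distrib, sum_pi_single', sum_const, card_univ,
        Fintype.card_fin, nsmul_eq_mul, mul_one, mem_univ, if_true]
      linear_combination -hlam
    · simp [hu, sum_sub_distrib]
      ring

theorem isRoot_of_hasEig_completeBridge {lam : ℝ}
    (h : HasEig ((bridgeGlueOne (⊤ : SimpleGraph (Fin n)) ⊤ v₁ v₂).lapMatrix ℝ) lam)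
    (h0 : lam ≠ 0) (hlamn : lam ≠ n) : lam ^ 2 - (n + 2) * lam + 2 = 0 := by
  obtain ⟨f, hf0, hf⟩ := h
  have suml : lam * ∑ u, f (Sum.inl u) = f (Sum.inl v₁) - f (Sum.inr v₂) := by
    rw [← sum_bridgeGlueOne_lapMatrix_mulVec_inl (G₁ := ⊤) (G₂ := ⊤) f, hf, mul_sum]; rfl
  have sumr : lam * ∑ u, f (Sum.inr u) = f (Sum.inr v₂) - f (Sum.inl v₁) := by
    rw [← sum_bridgeGlueOne_lapMatrix_mulVec_inr (G₁ := ⊤) (G₂ := ⊤) f, hf, mul_sum]; rfl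
  have rowl (u) : lam * f (Sum.inl u) = n * f (Sum.inl u) - ∑ w, f (Sum.inl w) +
      if u = v₁ then f (Sum.inl v₁) - f (Sum.inr v₂) else 0 := by
    rw [← completeBridge_lapMatrix_mulVec_inl, hf]; rfl
  have rowr (u) : lam * f (Sum.inr u) = n * f (Sum.inr u) - ∑ w, f (Sum.inr w) +
      if u = v₂ then f (Sum.inr v₂) - f (Sum.inl v₁) else 0 := by
    rw [← completeBridge_lapMatrix_mulVec_inr, hf]; rfl
  have hD : (lam ^ 2 - (n + 2) * lam + 2) * (f (Sum.inl v₁) - f (Sum.inr v₂)) = 0 := by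
    have r₁ := rowl v₁
    have r₂ := rowr v₂
    rw [if_pos rfl] at r₁ r₂
    linear_combination lam * (r₁ - r₂) - suml + sumr
  refine (mul_eq_zero.mp hD).resolve_right fun hD₁ => hf0 ?_
  have hD₂ : f (Sum.inr v₂) - f (Sum.inl v₁) = 0 := by linarith
  have hS₁ : ∑ u, f (Sum.inl u) = 0 := by simpa [hD₁, h0] using suml
  have hS₂ : ∑ u, f (Sum.inr u) = 0 := by simpa [hD₂, h0] using sumr
  have eq_zero {x : ℝ} (hx : lam * x = n * x) : x = 0 :=
    (mul_eq_zero.mp (by linarith : ((n : ℝ) - lam) * x = 0)).resolve_left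
      (sub_ne_zero.mpr (Ne.symm hlamn))
  ext (u | u)
  · exact eq_zero (by simpa only [hD₁, hS₁, ite_self, sub_zero, add_zero] using rowl u)
  · exact eq_zero (by simpa only [hD₂, hS₂, ite_self, sub_zero, add_zero] using rowr u)

end completeBridge

theorem fiedler_bridgeGlueOne_complete_same (n : ℕ) (hn : 2 ≤ n) (v₁ v₂ : Fin n) :
    HasEig ((bridgeGlueOne (⊤ : SimpleGraph (Fin n)) (⊤ : SimpleGraph (Fin n))
        v₁ v₂).lapMatrix ℝ)
      (((n : ℝ) + 2 - Real.sqrt ((n : ℝ) ^ 2 + 4 * n - 4)) / 2) ∧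
    (∀ lam : ℝ, lam ≠ 0 →
      HasEig ((bridgeGlueOne (⊤ : SimpleGraph (Fin n)) (⊤ : SimpleGraph (Fin n))
        v₁ v₂).lapMatrix ℝ) lam →
      ((n : ℝ) + 2 - Real.sqrt ((n : ℝ) ^ 2 + 4 * n - 4)) / 2 ≤ lam) := by
  have hn₁ : (1 : ℝ) ≤ n := by exact_mod_cast v₁.pos
  rw [show (n : ℝ) ^ 2 + 4 * n - 4 = (n + 2) ^ 2 - 4 * 2 by ring]
  refine ⟨hasEig_completeBridge_of_isRoot hn (sub_sqrt_discrim_div_two_isRoot (by nlinarith)),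
    fun lam h0 hlam => sub_sqrt_discrim_div_two_le ?_⟩
  by_cases hln : lam = n
  · nlinarith
  · exact (isRoot_of_hasEig_completeBridge hlam h0 hln).le
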